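/- arXiv:2409.08434 — 4 statements merged into one kernel-verified Lean document; each statement's English description precedes it below -/
import Mathlib

section
/- Let P be a row-stochastic matrix on a finite state space S (P(j|i) >= 0, sum_j P(j|i) = 1). Define γ = 1 - min_{i,k ∈ S} sum_{j ∈ S} min{P(j|i), P(j|k)}. Then for every vector v ∈ R^{|S|}, sp(Pv) <= γ·sp(v), where sp(u) = max_i u(i) - min_i u(i). -/
/-!
Write `r = min (P i) (P k)` for the common part of rows `i` and `k`. Both `P i - r` and `P k - r`
are nonnegative with the same mass `1 - ∑ r`, and `r` cancels in `(P v) i - (P v) k`, so this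
difference is at most `(1 - ∑ r) (max v - min v) ≤ γ · sp v`. Taking the worst pair `i, k`
bounds `sp (P v)`.
-/

/-- The span semi-norm. -/
noncomputable def sp {S : Type*} [Fintype S] [Nonempty S] (v : S → ℝ) : ℝ :=
  (⨆ i, v i) - ⨅ i, v i

open Finset

section Span

variable {S : Type*} [Fintype S]

theorem sum_mul_le_sum_mul_iSup {w : S → ℝ} (hw : ∀ j, 0 ≤ w j) (v : S → ℝ) :
    ∑ j, w j * v j ≤ (∑ j, w j) * ⨆ i, v i := by
  rw [sum_mul]
  exact sum_le_sum fun j _ =>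
    mul_le_mul_of_nonneg_left (le_ciSup (Finite.bddAbove_range v) j) (hw j)

theorem sum_mul_iInf_le_sum_mul {w : S → ℝ} (hw : ∀ j, 0 ≤ w j) (v : S → ℝ) :
    (∑ j, w j) * (⨅ i, v i) ≤ ∑ j, w j * v j := by
  rw [sum_mul]
  exact sum_le_sum fun j _ =>
    mul_le_mul_of_nonneg_left (ciInf_le (Finite.bddBelow_range v) j) (hw j)

variable [Nonempty S]

theorem sp_nonneg (v : S → ℝ) : 0 ≤ sp v := by
  obtain ⟨j⟩ := ‹Nonempty S›
  exact sub_nonneg.2 <|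
    (ciInf_le (Finite.bddBelow_range v) j).trans (le_ciSup (Finite.bddAbove_range v) j)

theorem sp_le_of_forall_sub_le {u : S → ℝ} {c : ℝ} (h : ∀ i k, u i - u k ≤ c) :
    sp u ≤ c := by
  rw [sp, sub_le_iff_le_add]
  refine ciSup_le fun i => ?_
  rw [← sub_le_iff_le_add']
  exact le_ciInf fun k => by linarith [h i k]

theorem sum_mul_sub_sum_mul_le {p q : S → ℝ} (hpq : ∑ j, p j = ∑ j, q j) (v : S → ℝ) :
    ∑ j, p j * v j - ∑ j, q j * v j ≤ (∑ j, p j - ∑ j, min (p j) (q j)) * sp v := by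
  set d := ∑ j, p j - ∑ j, min (p j) (q j)
  have hp : ∑ j, (p j - min (p j) (q j)) = d := sum_sub_distrib ..
  have hq : ∑ j, (q j - min (p j) (q j)) = d := by rw [sum_sub_distrib, ← hpq]
  have hsplit : ∑ j, p j * v j - ∑ j, q j * v j =
      ∑ j, (p j - min (p j) (q j)) * v j - ∑ j, (q j - min (p j) (q j)) * v j := by
    simp only [sub_mul, sum_sub_distrib]
    ring
  have hupper := sum_mul_le_sum_mul_iSup (fun j => sub_nonneg.2 (min_le_left (p j) (q j))) v
  have hlower := sum_mul_iInf_le_sum_mul (fun j => sub_nonneg.2 (min_le_right (p j) (q j))) v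
  rw [hp] at hupper
  rw [hq] at hlower
  rw [hsplit, sp, mul_sub]
  exact sub_le_sub hupper hlower

end Span

theorem span_contraction_stochastic_general {S : Type*} [Fintype S] [Nonempty S]
    (P : S → S → ℝ) (hrow : ∀ i, ∑ j, P i j = 1)
    (v : S → ℝ) :
    sp (fun i => ∑ j, P i j * v j) ≤
      (1 - ⨅ i, ⨅ k, ∑ j, min (P i j) (P k j)) * sp v := by
  refine sp_le_of_forall_sub_le fun i k => ?_
  have hoverlap : ⨅ i, ⨅ k, ∑ j, min (P i j) (P k j) ≤ ∑ j, min (P i j) (P k j) :=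
    (ciInf_le (Finite.bddBelow_range _) i).trans (ciInf_le (Finite.bddBelow_range _) k)
  calc ∑ j, P i j * v j - ∑ j, P k j * v j
      ≤ (∑ j, P i j - ∑ j, min (P i j) (P k j)) * sp v :=
        sum_mul_sub_sum_mul_le ((hrow i).trans (hrow k).symm) v
    _ ≤ (1 - ⨅ i, ⨅ k, ∑ j, min (P i j) (P k j)) * sp v := by
        rw [hrow i]
        exact mul_le_mul_of_nonneg_right (by linarith) (sp_nonneg v)

/-- Dobrushin contraction: for a row-stochastic matrix `P` on a finite state space,
`sp (P v) ≤ γ · sp v` where `γ = 1 - min_{i,k} ∑_j min (P j|i) (P j|k)`. -/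
theorem span_contraction_stochastic {S : Type*} [Fintype S] [Nonempty S]
    (P : S → S → ℝ) (hP : ∀ i j, 0 ≤ P i j) (hrow : ∀ i, ∑ j, P i j = 1)
    (v : S → ℝ) :
    sp (fun i => ∑ j, P i j * v j) ≤
      (1 - ⨅ i, ⨅ k, ∑ j, min (P i j) (P k j)) * sp v :=
  span_contraction_stochastic_general P hrow v
end

section
/- Suppose a non-stationary finite MDP satisfies: there exists J ∈ ℕ⁺ and η > 0 such that for any pair of policy sequences and any t, the J-step composed transition matrices P¹ = P_t^{π¹_t}···P_{t+J}^{π¹_{t+J}} and P² = P_t^{π²_t}···P_{t+J}^{π²_{t+J}} satisfy min_{s₁,s₂} sum_j min{P¹(j|s₁), P²(j|s₂)} >= η. Then the composed Bellman operator L_t ∘ ··· ∘ L_{t+J} is a span contraction with coefficient γ = 1 - η: sp(L_t∘···∘L_{t+J} u - L_t∘···∘L_{t+J} v) <= γ·sp(u - v) for all u, v ∈ R^{|S|}. -/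
/-- The Bellman (optimality) operator of the non-stationary MDP at time `t`. -/
noncomputable def bell {S A : Type*} [Fintype S] [Fintype A] [Nonempty A]
    (r : ℕ → S → A → ℝ) (P : ℕ → S → A → S → ℝ) (t : ℕ) (v : S → ℝ) : S → ℝ :=
  fun s => ⨆ a, (r t s a + ∑ s', P t s a s' * v s')

/-- `bellComp r P t n v = L_t ∘ ⋯ ∘ L_{t+n} v`. -/
noncomputable def bellComp {S A : Type*} [Fintype S] [Fintype A] [Nonempty A]
    (r : ℕ → S → A → ℝ) (P : ℕ → S → A → S → ℝ) : ℕ → ℕ → (S → ℝ) → S → ℝ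
  | t, 0, v => bell r P t v
  | t, n + 1, v => bell r P t (bellComp r P (t + 1) n v)

/-- `polP P π t n = P_t^{π_t} ⋯ P_{t+n}^{π_{t+n}}`, the composed transition matrix. -/
noncomputable def polP {S A : Type*} [Fintype S]
    (P : ℕ → S → A → S → ℝ) (π : ℕ → S → A) : ℕ → ℕ → S → S → ℝ
  | t, 0 => fun s j => P t s (π t s) j
  | t, n + 1 => fun s j => ∑ s', P t s (π t s) s' * polP P π (t + 1) n s' j

open Finset

section Span

variable {ι : Type*} [Fintype ι] [Nonempty ι]

lemma sp_nonneg_s5 (w : ι → ℝ) : 0 ≤ sp w :=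
  sub_nonneg.2 (ciInf_le_ciSup (Finite.bddBelow_range w) (Finite.bddAbove_range w))

lemma sp_le_of_forall_sub_le_s5 {w : ι → ℝ} {c : ℝ} (h : ∀ i j, w i - w j ≤ c) : sp w ≤ c := by
  rw [sp, sub_le_iff_le_add]
  exact ciSup_le fun i => sub_le_iff_le_add'.1 <| le_ciInf fun j => sub_le_comm.1 (h i j)

/-- Dobrushin: after removing the shared mass `min (p j) (q j)`, `p` and `q` each keep mass
`1 - ∑ j, min (p j) (q j)`, and `w` separates two such masses by at most its span. -/
lemma sum_mul_sub_sum_mul_le_sp {p q : ι → ℝ} (hp : ∑ j, p j = 1) (hq : ∑ j, q j = 1)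
    (w : ι → ℝ) :
    ∑ j, p j * w j - ∑ j, q j * w j ≤ (1 - ∑ j, min (p j) (q j)) * sp w := by
  set m := fun j => min (p j) (q j)
  calc ∑ j, p j * w j - ∑ j, q j * w j
      = ∑ j, ((p j - m j) * w j - (q j - m j) * w j) := by
        rw [← sum_sub_distrib]; exact sum_congr rfl fun j _ => by ring
    _ ≤ ∑ j, ((p j - m j) * (⨆ i, w i) - (q j - m j) * (⨅ i, w i)) :=
        sum_le_sum fun j _ => sub_le_sub
          (mul_le_mul_of_nonneg_left (le_ciSup (Finite.bddAbove_range w) j)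
            (sub_nonneg.2 (min_le_left _ _)))
          (mul_le_mul_of_nonneg_left (ciInf_le (Finite.bddBelow_range w) j)
            (sub_nonneg.2 (min_le_right _ _)))
    _ = (1 - ∑ j, m j) * sp w := by
        simp only [sum_sub_distrib, ← sum_mul, hp, hq, sp]; ring

end Span

section Policy

variable {S A : Type*} [Fintype S] (P : ℕ → S → A → S → ℝ)

lemma polP_congr {π π' : ℕ → S → A} (n t : ℕ) (h : ∀ k ≥ t, π k = π' k) :
    polP P π t n = polP P π' t n := by
  induction n generalizing t with
  | zero => simp only [polP, h t le_rfl]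
  | succ n ih =>
    simp only [polP, h t le_rfl, ih (t + 1) fun k hk => h k (by omega)]

lemma sum_polP_succ_mul (π : ℕ → S → A) (n t : ℕ) (s : S) (w : S → ℝ) :
    ∑ j, polP P π t (n + 1) s j * w j =
      ∑ s', P t s (π t s) s' * ∑ j, polP P π (t + 1) n s' j * w j := by
  simp only [polP, sum_mul, mul_sum, mul_assoc]
  exact sum_comm

lemma sum_polP (hrow : ∀ t s a, ∑ s', P t s a s' = 1) (π : ℕ → S → A) (n t : ℕ) (s : S) :
    ∑ j, polP P π t n s j = 1 := by
  induction n generalizing t s with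
  | zero => exact hrow _ _ _
  | succ n ih =>
    simpa only [mul_one, ih, hrow] using sum_polP_succ_mul P π n t s fun _ => 1

end Policy

section Bellman

variable {S A : Type*} [Fintype S] [Fintype A] [Nonempty A]
  (r : ℕ → S → A → ℝ) (P : ℕ → S → A → S → ℝ)

lemma le_bell (t : ℕ) (v : S → ℝ) (s : S) (a : A) :
    r t s a + ∑ s', P t s a s' * v s' ≤ bell r P t v s :=
  le_ciSup (Finite.bddAbove_range fun a => r t s a + ∑ s', P t s a s' * v s') a

lemma exists_bell_eq (t : ℕ) (v : S → ℝ) (s : S) :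
    ∃ a, bell r P t v s = r t s a + ∑ s', P t s a s' * v s' := by
  obtain ⟨a, ha⟩ := Finite.exists_max fun a => r t s a + ∑ s', P t s a s' * v s'
  exact ⟨a, le_antisymm (ciSup_le ha) (le_bell r P t v s a)⟩

lemma exists_bell_sub_le (t : ℕ) (u v : S → ℝ) :
    ∃ a : S → A, ∀ s, bell r P t u s - bell r P t v s ≤ ∑ j, P t s (a s) j * (u j - v j) := by
  choose a ha using exists_bell_eq r P t u
  refine ⟨a, fun s => ?_⟩
  have hv := le_bell r P t v s (a s)
  simp only [mul_sub, sum_sub_distrib]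
  linarith [ha s]

lemma exists_bellComp_sub_le (hP : ∀ t s a s', 0 ≤ P t s a s') (u v : S → ℝ) (n t : ℕ) :
    ∃ π : ℕ → S → A, ∀ s,
      bellComp r P t n u s - bellComp r P t n v s ≤ ∑ j, polP P π t n s j * (u j - v j) := by
  induction n generalizing t with
  | zero =>
    obtain ⟨a, ha⟩ := exists_bell_sub_le r P t u v
    exact ⟨fun _ => a, ha⟩
  | succ n ih =>
    obtain ⟨π, hπ⟩ := ih (t + 1)
    obtain ⟨a, ha⟩ :=
      exists_bell_sub_le r P t (bellComp r P (t + 1) n u) (bellComp r P (t + 1) n v)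
    have htail : polP P (Function.update π t a) (t + 1) n = polP P π (t + 1) n :=
      polP_congr P n (t + 1) fun k hk => Function.update_of_ne (by omega) a π
    refine ⟨Function.update π t a, fun s => ?_⟩
    calc bellComp r P t (n + 1) u s - bellComp r P t (n + 1) v s
        ≤ ∑ s', P t s (a s) s' *
            (bellComp r P (t + 1) n u s' - bellComp r P (t + 1) n v s') := ha s
      _ ≤ ∑ s', P t s (a s) s' * ∑ j, polP P π (t + 1) n s' j * (u j - v j) :=
          sum_le_sum fun s' _ => mul_le_mul_of_nonneg_left (hπ s') (hP _ _ _ _)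
      _ = ∑ j, polP P (Function.update π t a) t (n + 1) s j * (u j - v j) := by
          rw [sum_polP_succ_mul, htail, Function.update_self]

end Bellman

theorem J_stage_span_contraction_general {S A : Type*} [Fintype S] [Nonempty S]
    [Fintype A] [Nonempty A]
    (r : ℕ → S → A → ℝ) (P : ℕ → S → A → S → ℝ)
    (hP : ∀ t s a s', 0 ≤ P t s a s') (hrow : ∀ t s a, ∑ s', P t s a s' = 1)
    (J : ℕ) (η : ℝ)
    (hoverlap : ∀ (π₁ π₂ : ℕ → S → A) (t : ℕ) (s₁ s₂ : S),
      η ≤ ∑ j, min (polP P π₁ t J s₁ j) (polP P π₂ t J s₂ j)) :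
    ∀ (t : ℕ) (u v : S → ℝ),
      sp (bellComp r P t J u - bellComp r P t J v) ≤ (1 - η) * sp (u - v) := by
  intro t u v
  refine sp_le_of_forall_sub_le_s5 fun s₁ s₂ => ?_
  obtain ⟨π₁, h₁⟩ := exists_bellComp_sub_le r P hP u v J t
  obtain ⟨π₂, h₂⟩ := exists_bellComp_sub_le r P hP v u J t
  have hdob := sum_mul_sub_sum_mul_le_sp (sum_polP P hrow π₁ J t s₁)
    (sum_polP P hrow π₂ J t s₂) (u - v)
  have hshrink : (1 - ∑ j, min (polP P π₁ t J s₁ j) (polP P π₂ t J s₂ j)) * sp (u - v) ≤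
      (1 - η) * sp (u - v) :=
    mul_le_mul_of_nonneg_right (by linarith [hoverlap π₁ π₂ t s₁ s₂]) (sp_nonneg_s5 _)
  have hu := h₁ s₁
  have hv := h₂ s₂
  simp only [Pi.sub_apply, mul_sub, sum_sub_distrib] at hu hv hdob ⊢
  linarith

/-- If all pairs of `J`-step composed transition matrices (for any pair of policy
sequences and any starting time) have Dobrushin overlap at least `η > 0`, then the
composed Bellman operator `L_t ∘ ⋯ ∘ L_{t+J}` is a span contraction with
coefficient `γ = 1 - η`. -/
theorem J_stage_span_contraction {S A : Type*} [Fintype S] [Nonempty S]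
    [Fintype A] [Nonempty A]
    (r : ℕ → S → A → ℝ) (P : ℕ → S → A → S → ℝ)
    (hr : ∀ t s a, r t s a ∈ Set.Icc (0 : ℝ) 1)
    (hP : ∀ t s a s', 0 ≤ P t s a s') (hrow : ∀ t s a, ∑ s', P t s a s' = 1)
    (J : ℕ) (hJ : 0 < J) (η : ℝ) (hη : 0 < η)
    (hoverlap : ∀ (π₁ π₂ : ℕ → S → A) (t : ℕ) (s₁ s₂ : S),
      η ≤ ∑ j, min (polP P π₁ t J s₁ j) (polP P π₂ t J s₂ j)) :
    ∀ (t : ℕ) (u v : S → ℝ),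
      sp (bellComp r P t J u - bellComp r P t J v) ≤ (1 - η) * sp (u - v) :=
  J_stage_span_contraction_general r P hP hrow J η hoverlap
end

section
/- Let L_{t+ℓ} be the true Bellman operator (with reward r_{t+ℓ} and kernel P_{t+ℓ}) and L̂_{t+ℓ|t} the Bellman operator built from predictions r̂, P̂ satisfying |r̂_{t+ℓ|t}(s,a) - r_{t+ℓ}(s,a)| < ε_ℓ and ||P̂_{t+ℓ|t}(·|s,a) - P_{t+ℓ}(·|s,a)||_TV < δ_ℓ for all (s,a). If Ṽ, V̂ ∈ R^{|S|} satisfy sp(Ṽ) < D, sp(V̂) < D, and sp(Ṽ - V̂) <= b, then sp(L_{t+ℓ} Ṽ - L̂_{t+ℓ|t} V̂) <= b + 2ε_ℓ + 2δ_ℓ D. -/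
section aux
variable {ι : Type*} [Fintype ι] [Nonempty ι]

lemma my_le_csup (f : ι → ℝ) (i : ι) : f i ≤ ⨆ j, f j :=
  le_ciSup (Set.Finite.bddAbove (Set.finite_range f)) i

lemma my_cinf_le (f : ι → ℝ) (i : ι) : (⨅ j, f j) ≤ f i :=
  ciInf_le (Set.Finite.bddBelow (Set.finite_range f)) i

lemma my_sup_sub_sup_le (x y : ι → ℝ) :
    (⨆ a, x a) - (⨆ a, y a) ≤ ⨆ a, (x a - y a) := by
  rw [sub_le_iff_le_add]
  refine ciSup_le fun a => ?_
  have h1 : x a - y a ≤ ⨆ a, (x a - y a) := my_le_csup (fun a => x a - y a) a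
  have h2 : y a ≤ ⨆ a, y a := my_le_csup _ a
  linarith

lemma my_inf_le_sup_sub_sup (x y : ι → ℝ) :
    (⨅ a, (x a - y a)) ≤ (⨆ a, x a) - (⨆ a, y a) := by
  obtain ⟨a, ha⟩ := Finite.exists_max y
  have hy : (⨆ a, y a) = y a := le_antisymm (ciSup_le ha) (my_le_csup _ a)
  rw [hy]
  have h1 := my_cinf_le (fun a => x a - y a) a
  have h2 := my_le_csup x a
  linarith

lemma my_sum_mul_le_sup {p w : ι → ℝ} (hp : ∀ i, 0 ≤ p i) (h1 : ∑ i, p i = 1) :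
    ∑ i, p i * w i ≤ ⨆ i, w i := by
  calc ∑ i, p i * w i ≤ ∑ i, p i * (⨆ j, w j) :=
        Finset.sum_le_sum fun i _ => mul_le_mul_of_nonneg_left (my_le_csup w i) (hp i)
    _ = ⨆ j, w j := by rw [← Finset.sum_mul, h1, one_mul]

lemma my_inf_le_sum_mul {p w : ι → ℝ} (hp : ∀ i, 0 ≤ p i) (h1 : ∑ i, p i = 1) :
    (⨅ i, w i) ≤ ∑ i, p i * w i := by
  calc (⨅ j, w j) = ∑ i, p i * (⨅ j, w j) := by rw [← Finset.sum_mul, h1, one_mul]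
    _ ≤ ∑ i, p i * w i :=
        Finset.sum_le_sum fun i _ => mul_le_mul_of_nonneg_left (my_cinf_le w i) (hp i)

lemma my_tv_bound {p q w : ι → ℝ} {δ D : ℝ}
    (h1 : ∑ i, p i = 1) (h2 : ∑ i, q i = 1)
    (htv : (1/2) * ∑ i, |q i - p i| < δ) (hsp : sp w < D) :
    |∑ i, q i * w i - ∑ i, p i * w i| ≤ δ * D := by
  have hD : 0 ≤ D := by
    have h3 := my_le_csup w (Classical.arbitrary ι)
    have h4 := my_cinf_le w (Classical.arbitrary ι)
    unfold sp at hsp; linarith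
  set c := ((⨆ i, w i) + ⨅ i, w i) / 2 with hcdef
  have hc : ∀ i, |w i - c| ≤ D / 2 := by
    intro i
    have h3 := my_le_csup w i
    have h4 := my_cinf_le w i
    rw [abs_le]
    unfold sp at hsp
    constructor <;> rw [hcdef] <;> nlinarith
  have key : ∑ i, (q i - p i) * (w i - c) = ∑ i, q i * w i - ∑ i, p i * w i := by
    have h5 : ∀ i, (q i - p i) * (w i - c) =
        (q i * w i - p i * w i) - (q i * c - p i * c) := fun i => by ring
    simp only [h5, Finset.sum_sub_distrib, ← Finset.sum_mul, h1, h2]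
    ring
  rw [← key]
  calc |∑ i, (q i - p i) * (w i - c)| ≤ ∑ i, |(q i - p i) * (w i - c)| :=
        Finset.abs_sum_le_sum_abs _ _
    _ ≤ ∑ i, |q i - p i| * (D / 2) := by
        refine Finset.sum_le_sum fun i _ => ?_
        rw [abs_mul]
        exact mul_le_mul_of_nonneg_left (hc i) (abs_nonneg _)
    _ = (∑ i, |q i - p i|) * (D / 2) := by rw [← Finset.sum_mul]
    _ ≤ (2 * δ) * (D / 2) := by
        have : ∑ i, |q i - p i| ≤ 2 * δ := by linarith
        exact mul_le_mul_of_nonneg_right this (by linarith)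
    _ = δ * D := by ring

end aux

/-- One step error bound: if the predicted reward and kernel are within `ε` (sup-norm)
and `δ` (total variation) of the true ones, and `Ṽ, V̂` have span less than `D` and
`sp (Ṽ - V̂) ≤ b`, then the span of the difference between the true Bellman backup
of `Ṽ` and the predicted Bellman backup of `V̂` is at most `b + 2ε + 2δD`. -/
theorem one_step_error_bound {S A : Type*} [Fintype S] [Nonempty S]
    [Fintype A] [Nonempty A]
    (r rhat : S → A → ℝ) (P Phat : S → A → S → ℝ)
    (hP : ∀ s a s', 0 ≤ P s a s') (hrow : ∀ s a, ∑ s', P s a s' = 1)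
    (hPhat : ∀ s a s', 0 ≤ Phat s a s') (hrowhat : ∀ s a, ∑ s', Phat s a s' = 1)
    (ε δ b D : ℝ)
    (hrerr : ∀ s a, |rhat s a - r s a| < ε)
    (hPerr : ∀ s a, (1 / 2) * ∑ j, |Phat s a j - P s a j| < δ)
    (Vt Vh : S → ℝ) (hVt : sp Vt < D) (hVh : sp Vh < D) (hb : sp (Vt - Vh) ≤ b) :
    sp ((fun s => ⨆ a, (r s a + ∑ j, P s a j * Vt j)) -
        (fun s => ⨆ a, (rhat s a + ∑ j, Phat s a j * Vh j))) ≤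
      b + 2 * ε + 2 * δ * D := by
  set F : S → ℝ := fun s => ⨆ a, (r s a + ∑ j, P s a j * Vt j) with hF
  set G : S → ℝ := fun s => ⨆ a, (rhat s a + ∑ j, Phat s a j * Vh j) with hG
  set d : S → A → ℝ := fun s a =>
    (r s a + ∑ j, P s a j * Vt j) - (rhat s a + ∑ j, Phat s a j * Vh j) with hd
  set M : ℝ := ⨆ j, (Vt j - Vh j) with hM
  set m : ℝ := ⨅ j, (Vt j - Vh j) with hm
  have hMm : M - m ≤ b := by
    have : sp (Vt - Vh) = M - m := by
      unfold sp; simp only [Pi.sub_apply, hM, hm]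
    linarith [this ▸ hb]
  -- pointwise bounds on d
  have hub : ∀ s a, d s a ≤ ε + M + δ * D := by
    intro s a
    have hr : r s a - rhat s a ≤ ε := by
      have := hrerr s a; rw [abs_sub_comm, abs_lt] at this; linarith [this.1]
    have hsum : ∑ j, P s a j * (Vt j - Vh j) ≤ M :=
      my_sum_mul_le_sup (hP s a) (hrow s a)
    have hsplit : ∑ j, P s a j * (Vt j - Vh j)
        = ∑ j, P s a j * Vt j - ∑ j, P s a j * Vh j := by
      simp [mul_sub, Finset.sum_sub_distrib]
    have htv : |∑ j, Phat s a j * Vh j - ∑ j, P s a j * Vh j| ≤ δ * D :=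
      my_tv_bound (hrow s a) (hrowhat s a) (hPerr s a) hVh
    rw [abs_le] at htv
    simp only [hd]
    rw [hsplit] at hsum
    linarith [htv.1]
  have hlb : ∀ s a, -ε + m - δ * D ≤ d s a := by
    intro s a
    have hr : -ε ≤ r s a - rhat s a := by
      have := hrerr s a; rw [abs_sub_comm, abs_lt] at this; linarith [this.2]
    have hsum : m ≤ ∑ j, P s a j * (Vt j - Vh j) :=
      my_inf_le_sum_mul (hP s a) (hrow s a)
    have hsplit : ∑ j, P s a j * (Vt j - Vh j)
        = ∑ j, P s a j * Vt j - ∑ j, P s a j * Vh j := by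
      simp [mul_sub, Finset.sum_sub_distrib]
    have htv : |∑ j, Phat s a j * Vh j - ∑ j, P s a j * Vh j| ≤ δ * D :=
      my_tv_bound (hrow s a) (hrowhat s a) (hPerr s a) hVh
    rw [abs_le] at htv
    simp only [hd]
    rw [hsplit] at hsum
    linarith [htv.2]
  -- key two-point inequality
  have hkey : ∀ s s', (F s - G s) - (F s' - G s') ≤ b + 2 * ε + 2 * δ * D := by
    intro s s'
    have h1 : F s - G s ≤ ⨆ a, d s a := my_sup_sub_sup_le _ _
    have h2 : (⨅ a, d s' a) ≤ F s' - G s' := my_inf_le_sup_sub_sup _ _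
    have h3 : (⨆ a, d s a) ≤ ε + M + δ * D := ciSup_le fun a => hub s a
    have h4 : -ε + m - δ * D ≤ ⨅ a, d s' a := le_ciInf fun a => hlb s' a
    linarith
  unfold sp
  have hFG : ∀ s, (F - G) s = F s - G s := fun s => rfl
  rw [sub_le_iff_le_add]
  refine ciSup_le fun s => ?_
  rw [hFG]
  have : F s - G s - (b + 2 * ε + 2 * δ * D) ≤ ⨅ s', (F - G) s' :=
    le_ciInf fun s' => by rw [hFG]; linarith [hkey s s']
  linarith
end

section
/- There exists a family of non-stationary finite MDPs, one for each pair (k, T) with k < T, that violates the uniform ergodicity assumption and on which every algorithm with prediction horizon k incurs expected regret at least c·(T - k - 1) for an absolute constant c > 0 (c = 1/2 suffices): the MDP has three states, the learner must irreversibly commit at time 0 to one of two absorbing states, the rewarding absorbing state s* is chosen uniformly at random and revealed in the dynamics only from time k+1 onward, and reward 1 per step accrues only at s* after time k+1. -/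
/-- Expected cumulative reward of policy `π` over `n` steps starting at time `t`. -/
noncomputable def polVal {S A : Type*} [Fintype S]
    (r : ℕ → S → A → ℝ) (P : ℕ → S → A → S → ℝ) (π : ℕ → S → A) :
    ℕ → ℕ → S → ℝ
  | 0, _, _ => 0
  | n + 1, t, s =>
      r t s (π t s) + ∑ s', P t s (π t s) s' * polVal r P π n (t + 1) s'

open Finset

section

variable {S A : Type*} [DecidableEq S]

def IsAbsorbing (P : ℕ → S → A → S → ℝ) (s : S) : Prop :=
  ∀ t a s', P t s a s' = if s' = s then 1 else 0

def detKernel (f : S → A → S) : ℕ → S → A → S → ℝ :=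
  fun _ s a s' => if s' = f s a then 1 else 0

lemma detKernel_nonneg (f : S → A → S) (t : ℕ) (s : S) (a : A) (s' : S) :
    0 ≤ detKernel f t s a s' := by
  unfold detKernel
  split_ifs <;> norm_num

lemma isAbsorbing_detKernel {f : S → A → S} {s : S} (hs : ∀ a, f s a = s) :
    IsAbsorbing (detKernel f) s := by
  intro t a s'
  rw [detKernel, hs]

variable [Fintype S]

lemma detKernel_sum_mul (f : S → A → S) (t : ℕ) (s : S) (a : A) (v : S → ℝ) :
    ∑ s', detKernel f t s a s' * v s' = v (f s a) := by
  simp [detKernel, ite_mul]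

lemma detKernel_sum_eq_one (f : S → A → S) (t : ℕ) (s : S) (a : A) :
    ∑ s', detKernel f t s a s' = 1 := by
  simpa using detKernel_sum_mul f t s a 1

variable {P : ℕ → S → A → S → ℝ} {s : S}

namespace IsAbsorbing

lemma sum_mul (h : IsAbsorbing P s) (t : ℕ) (a : A) (v : S → ℝ) :
    ∑ s', P t s a s' * v s' = v s := by
  simp [h t a, ite_mul]

lemma polP_eq (h : IsAbsorbing P s) (π : ℕ → S → A) (J t : ℕ) (j : S) :
    polP P π t J s j = if j = s then 1 else 0 := by
  induction J generalizing t with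
  | zero => exact h t (π t s) j
  | succ J ih => simp only [polP, ih, h.sum_mul]

lemma polVal_eq (h : IsAbsorbing P s) (r : ℕ → S → A → ℝ) (π : ℕ → S → A) (n t : ℕ) :
    polVal r P π n t s = ∑ j ∈ range n, r (t + j) s (π (t + j) s) := by
  induction n generalizing t with
  | zero => simp [polVal]
  | succ n ih =>
    rw [polVal, h.sum_mul, ih, sum_range_succ']
    simp only [add_assoc, add_comm 1, add_zero]
    ring

lemma bell_eq [Fintype A] [Nonempty A] (h : IsAbsorbing P s) (r : ℕ → S → A → ℝ) (t : ℕ)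
    (v : S → ℝ) : bell r P t v s = (⨆ a, r t s a) + v s := by
  simp only [bell, h.sum_mul]
  exact ((OrderIso.addRight (v s)).map_ciSup (Set.finite_range _).bddAbove).symm

lemma bellComp_eq [Fintype A] [Nonempty A] (h : IsAbsorbing P s) (r : ℕ → S → A → ℝ)
    (v : S → ℝ) (n t : ℕ) :
    bellComp r P t n v s = ∑ j ∈ range (n + 1), (⨆ a, r (t + j) s a) + v s := by
  induction n generalizing t with
  | zero => simp [bellComp, h.bell_eq]
  | succ n ih =>
    rw [bellComp, h.bell_eq, ih, sum_range_succ' _ (n + 1)]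
    simp only [add_assoc, add_comm 1, add_zero]
    ring

end IsAbsorbing

lemma polP_overlap_eq_zero {s₁ s₂ : S} (h₁ : IsAbsorbing P s₁) (h₂ : IsAbsorbing P s₂)
    (hne : s₁ ≠ s₂) (J : ℕ) (π₁ π₂ : ℕ → S → A) (t : ℕ) :
    ∑ j, min (polP P π₁ t J s₁ j) (polP P π₂ t J s₂ j) = 0 := by
  refine sum_eq_zero fun j _ => ?_
  rw [h₁.polP_eq, h₂.polP_eq]
  split_ifs <;> simp_all

end

def commit (s : Fin 3) (a : Fin 2) : Fin 3 := if s = 0 then a.succ else s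

@[simp]
lemma commit_zero (a : Fin 2) : commit 0 a = a.succ := if_pos rfl

/-- Instance `σ` of the construction: `σ.succ` is the rewarding absorbing state `s*`. -/
def delayedReward (k : ℕ) (σ : Fin 2) (t : ℕ) (s : Fin 3) (_ : Fin 2) : ℝ :=
  if k + 1 < t ∧ s = σ.succ then 1 else 0

lemma isAbsorbing_commit {s : Fin 3} (hs : s ≠ 0) : IsAbsorbing (detKernel commit) s :=
  isAbsorbing_detKernel fun _ => if_neg hs

lemma delayedReward_mem_Icc (k : ℕ) (σ : Fin 2) (t : ℕ) (s : Fin 3) (a : Fin 2) :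
    delayedReward k σ t s a ∈ Set.Icc (0 : ℝ) 1 := by
  unfold delayedReward
  split_ifs <;> norm_num

lemma delayedReward_of_le {k t : ℕ} (ht : t ≤ k) (σ : Fin 2) : delayedReward k σ t = 0 := by
  ext s a
  simp [delayedReward, show ¬ k + 1 < t by omega]

lemma sum_delayedReward (k n : ℕ) (σ : Fin 2) (s : Fin 3) (a : Fin 2) :
    ∑ j ∈ range n, delayedReward k σ (1 + j) s a =
      if s = σ.succ then ((n - (k + 1) : ℕ) : ℝ) else 0 := by
  by_cases hs : s = σ.succ
  · have : (range n).filter (fun j => k + 1 < 1 + j) = Ico (k + 1) n := by ext; simp; omega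
    simp [delayedReward, hs, sum_boole, this]
  · simp [delayedReward, hs]

section
variable (k : ℕ) (σ : Fin 2)

lemma bellComp_commit_succ (m : ℕ) (a : Fin 2) :
    bellComp (delayedReward k σ) (detKernel commit) 1 m (fun _ => 0) a.succ =
      if a = σ then ((m + 1 - (k + 1) : ℕ) : ℝ) else 0 := by
  have action_free : ∀ t s, ⨆ a', delayedReward k σ t s a' = delayedReward k σ t s 0 :=
    fun _ _ => ciSup_const
  simp only [(isAbsorbing_commit a.succ_ne_zero).bellComp_eq, action_free, sum_delayedReward,
    Fin.succ_inj, add_zero]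

lemma bellComp_commit_start {T : ℕ} (hT : 0 < T) :
    bellComp (delayedReward k σ) (detKernel commit) 0 T (fun _ => 0) 0 =
      ((T - (k + 1) : ℕ) : ℝ) := by
  obtain ⟨m, rfl⟩ := Nat.exists_eq_add_one_of_ne_zero hT.ne'
  simp only [bellComp, bell, detKernel_sum_mul, commit_zero, bellComp_commit_succ,
    delayedReward_of_le (Nat.zero_le k), Pi.zero_apply, zero_add]
  refine le_antisymm (ciSup_le fun a => ?_) ?_
  · split_ifs <;> simp
  · exact le_ciSup_of_le (Set.finite_range _).bddAbove σ (by simp)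

lemma polVal_commit_start (T : ℕ) (a₀ : Fin 2) :
    polVal (delayedReward k σ) (detKernel commit) (fun _ _ => a₀) (T + 1) 0 0 =
      if a₀ = σ then ((T - (k + 1) : ℕ) : ℝ) else 0 := by
  rw [polVal, detKernel_sum_mul, commit_zero, (isAbsorbing_commit a₀.succ_ne_zero).polVal_eq,
    sum_delayedReward, delayedReward_of_le (Nat.zero_le k)]
  simp

end

/-- Linear-regret lower bound without the ergodicity assumption: for every horizon
`T` and prediction horizon `k` with `k + 1 < T` there is a pair of three-state
non-stationary MDP instances (indexed by the random rewarding absorbing state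
`σ ∈ Fin 2`, i.e. state `σ + 1`) such that: the instances are valid MDPs, they are
indistinguishable through step `k` (so any algorithm with prediction horizon `k`
must use the same time-`0` action `a₀` on both), states `1` and `2` are absorbing
(hence the uniform ergodicity / Dobrushin overlap assumption is violated: the
overlap is `0` for every `J`), the optimal value is `T - k - 1`, and for every
time-`0` action `a₀` the expected regret over the uniformly random instance is at
least `(1/2)·(T - k - 1)`. -/
theorem linear_regret_lower_bound (k T : ℕ) (hk : k + 1 < T) :
    ∃ (r : Fin 2 → ℕ → Fin 3 → Fin 2 → ℝ)
      (P : Fin 2 → ℕ → Fin 3 → Fin 2 → Fin 3 → ℝ),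
      -- valid transition kernels and rewards in [0,1]
      (∀ σ t s a s', 0 ≤ P σ t s a s') ∧
      (∀ σ t s a, ∑ s', P σ t s a s' = 1) ∧
      (∀ σ t s a, r σ t s a ∈ Set.Icc (0 : ℝ) 1) ∧
      -- the two instances coincide for the first k+1 steps (what a prediction
      -- horizon of k can reveal at time 0)
      (∀ σ₁ σ₂ t, t ≤ k → r σ₁ t = r σ₂ t ∧ P σ₁ t = P σ₂ t) ∧
      -- states 1 and 2 are absorbing
      (∀ σ t a s', P σ t 1 a s' = if s' = 1 then 1 else 0) ∧
      (∀ σ t a s', P σ t 2 a s' = if s' = 2 then 1 else 0) ∧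
      -- the uniform ergodicity assumption is violated: zero Dobrushin overlap
      (∀ (σ : Fin 2) (J : ℕ) (π₁ π₂ : ℕ → Fin 3 → Fin 2) (t : ℕ),
        ∑ j, min (polP (P σ) π₁ t J 1 j) (polP (P σ) π₂ t J 2 j) = 0) ∧
      -- the offline optimal value from the start state is T - k - 1
      (∀ σ, bellComp (r σ) (P σ) 0 T (fun _ => 0) 0 = (T : ℝ) - k - 1) ∧
      -- every algorithm with prediction horizon k commits to a single time-0
      -- action a₀ on both instances, and its expected regret (uniform over σ)
      -- is at least (1/2)(T - k - 1)
      (∀ a₀ : Fin 2,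
        (1 / 2) *
            ((bellComp (r 0) (P 0) 0 T (fun _ => 0) 0 -
                polVal (r 0) (P 0) (fun _ _ => a₀) (T + 1) 0 0) +
             (bellComp (r 1) (P 1) 0 T (fun _ => 0) 0 -
                polVal (r 1) (P 1) (fun _ _ => a₀) (T + 1) 0 0)) ≥
          (1 / 2) * ((T : ℝ) - k - 1)) := by
  have hV : ((T - (k + 1) : ℕ) : ℝ) = T - k - 1 := by
    rw [Nat.cast_sub hk.le]
    push_cast
    ring
  refine ⟨delayedReward k, fun _ => detKernel commit, fun _ => detKernel_nonneg commit,
    fun _ => detKernel_sum_eq_one commit, delayedReward_mem_Icc k,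
    fun σ₁ σ₂ t ht => ⟨by rw [delayedReward_of_le ht, delayedReward_of_le ht], rfl⟩,
    fun _ => isAbsorbing_commit (by decide), fun _ => isAbsorbing_commit (by decide),
    fun _ => polP_overlap_eq_zero (isAbsorbing_commit (by decide))
      (isAbsorbing_commit (by decide)) (by decide),
    fun σ => by rw [bellComp_commit_start k σ (by omega), hV], fun a₀ => ?_⟩
  simp only [bellComp_commit_start k _ (show 0 < T by omega), polVal_commit_start, hV]
  fin_cases a₀ <;> simp
end
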